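/- Let D' be a balanced bipartite digraph with colour classes X' and Y' of cardinality a' ≥ 3, let M' be a complete matching from X' to Y' in D', and suppose D' satisfies condition (A): d(x') + d(y') + d(x'') + d(y'') ≥ 6a' + 2 for all pairwise distinct x', x'' ∈ X', y', y'' ∈ Y' such that D' contains M'-compatible paths from x' to y' and from x'' to y''. Then D' contains an M'-compatible oriented cycle of length at least a'. -/

import Mathlib

namespace BipDigraph

variable {V : Type}

/-- Out-degree of `v` in the digraph `(V, A)`. -/
noncomputable def outdeg (A : V → V → Prop) (v : V) : ℕ := Nat.card {w : V // A v w}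

/-- In-degree of `v` in the digraph `(V, A)`. -/
noncomputable def indeg (A : V → V → Prop) (v : V) : ℕ := Nat.card {w : V // A w v}

/-- Degree of `v`: out-degree plus in-degree. -/
noncomputable def deg (A : V → V → Prop) (v : V) : ℕ := outdeg A v + indeg A v

/-- Out-degree of `v` relative to the vertex set `S`. -/
noncomputable def outdegIn (A : V → V → Prop) (S : Set V) (v : V) : ℕ := Nat.card {w : V // w ∈ S ∧ A v w}

/-- In-degree of `v` relative to the vertex set `S`. -/
noncomputable def indegIn (A : V → V → Prop) (S : Set V) (v : V) : ℕ := Nat.card {w : V // w ∈ S ∧ A w v}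

/-- Degree of `v` relative to the vertex set `S`. -/
noncomputable def degIn (A : V → V → Prop) (S : Set V) (v : V) : ℕ := outdegIn A S v + indegIn A S v

/-- The arc `(u,v)` belongs to the matching given by the function `M` on the class `X`. -/
def InM (X : Finset V) (M : V → V) (u v : V) : Prop := u ∈ X ∧ M u = v

/-- The arc `(u,v)` is an arc of the digraph not belonging to the matching. -/
def NotM (A : V → V → Prop) (X : Finset V) (M : V → V) (u v : V) : Prop :=
  A u v ∧ ¬ InM X M u v

/-- `M` is a complete matching from `X` to `Y`: every `x ∈ X` is matched along an arc
to a vertex of `Y`, and the matching arcs are independent. -/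
def CompleteMatching (A : V → V → Prop) (X Y : Finset V) (M : V → V) : Prop :=
  (∀ x ∈ X, M x ∈ Y ∧ A x (M x)) ∧ Set.InjOn M X

/-- Consecutive arcs of the list alternately satisfy `P` and `Q`, starting with `P`. -/
def Alt (P Q : V → V → Prop) : List V → Prop
  | [] => True
  | [_] => True
  | a :: b :: t => P a b ∧ Alt Q P (b :: t)

/-- `p` is an oriented path in `(V, A)` whose arcs are alternately in the matching `M`
(on `X`) and outside of it. -/
def IsCompatPath (A : V → V → Prop) (X : Finset V) (M : V → V) (p : List V) : Prop :=
  p ≠ [] ∧ p.Nodup ∧ p.Chain' A ∧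
    (Alt (InM X M) (NotM A X M) p ∨ Alt (NotM A X M) (InM X M) p)

/-- An `M`-compatible oriented path from `u` to `v`. -/
def IsCompatPathFromTo (A : V → V → Prop) (X : Finset V) (M : V → V)
    (p : List V) (u v : V) : Prop :=
  IsCompatPath A X M p ∧ p.head? = some u ∧ p.getLast? = some v

/-- `p` lists the vertices of an oriented cycle of `(V, A)` in cyclic order;
its length (number of arcs = number of vertices) is `p.length`. -/
def IsCycle (A : V → V → Prop) (p : List V) : Prop :=
  2 ≤ p.length ∧ p.Nodup ∧ ∃ u, p.head? = some u ∧ List.Chain' A (p ++ [u])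

/-- `p` is an oriented cycle whose arcs are alternately in the matching `M` (on `X`)
and outside of it. -/
def IsCompatCycle (A : V → V → Prop) (X : Finset V) (M : V → V) (p : List V) : Prop :=
  2 ≤ p.length ∧ p.Nodup ∧ ∃ u, p.head? = some u ∧ List.Chain' A (p ++ [u]) ∧
    (Alt (InM X M) (NotM A X M) (p ++ [u]) ∨ Alt (NotM A X M) (InM X M) (p ++ [u]))

/-- The digraph `(V, A)` contains an oriented cycle of length `n`. -/
def HasCycleOfLength (A : V → V → Prop) (n : ℕ) : Prop :=
  ∃ p : List V, IsCycle A p ∧ p.length = n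

/-- `(V, A)` is a balanced bipartite digraph with colour classes `X`, `Y` of cardinality `a`. -/
def BalancedBipartite (A : V → V → Prop) (X Y : Finset V) (a : ℕ) : Prop :=
  X.card = a ∧ Y.card = a ∧ Disjoint X Y ∧ (∀ v : V, v ∈ X ∨ v ∈ Y) ∧
    ∀ u v : V, A u v → (u ∈ X ∧ v ∈ Y) ∨ (u ∈ Y ∧ v ∈ X)

/-- Condition (M): `d(u) + d(v) ≥ 3a + 1` for every pair of distinct vertices `u, v`
with no arc between them in either direction. -/
def CondM (A : V → V → Prop) (a : ℕ) : Prop :=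
  ∀ u v : V, u ≠ v → ¬ A u v → ¬ A v u → 3 * a + 1 ≤ deg A u + deg A v

/-- Condition (A): `d(x') + d(y') + d(x'') + d(y'') ≥ 6a + 2` for all pairwise distinct
`x', x'' ∈ X`, `y', y'' ∈ Y` joined by `M`-compatible paths from `x'` to `y'` and from
`x''` to `y''`. -/
def CondA (A : V → V → Prop) (X Y : Finset V) (M : V → V) (a : ℕ) : Prop :=
  ∀ x' x'' y' y'' : V, x' ∈ X → x'' ∈ X → y' ∈ Y → y'' ∈ Y → x' ≠ x'' → y' ≠ y'' →
    (∃ p, IsCompatPathFromTo A X M p x' y') → (∃ p, IsCompatPathFromTo A X M p x'' y'') →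
    6 * a + 2 ≤ deg A x' + deg A y' + deg A x'' + deg A y''

/-- An `M`-compatible cycle all of whose vertices lie in `S`. -/
def IsCompatCycleIn (A : V → V → Prop) (X : Finset V) (M : V → V) (S : Set V)
    (p : List V) : Prop :=
  IsCompatCycle A X M p ∧ ∀ v ∈ p, v ∈ S

/-- An `M`-compatible path from `u` to `v` all of whose vertices lie in `S`. -/
def IsCompatPathFromToIn (A : V → V → Prop) (X : Finset V) (M : V → V) (S : Set V)
    (p : List V) (u v : V) : Prop :=
  IsCompatPathFromTo A X M p u v ∧ ∀ w ∈ p, w ∈ S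

/-- The digraph `(V, A)` is strongly connected. -/
def StronglyConnected (A : V → V → Prop) : Prop :=
  ∀ u v : V, u ≠ v →
    ∃ p : List V, p.Chain' A ∧ p.head? = some u ∧ p.getLast? = some v

/-!
Contract every matching arc `x → M x` to its tail `x`: the resulting digraph `H` on `X` has an
arc `u → v` iff `M u → v` is an arc of `D`. Paths and cycles of `H` lift to `M`-compatible paths
and cycles of `D` of twice the length. In `D` we have `d(x) ≤ a + d⁻_H(x)` and
`d(M u) ≤ a + d⁺_H(u)`, so condition (A) becomes
`d⁻_H(z₁) + d⁺_H(u₁) + d⁻_H(z₂) + d⁺_H(u₂) ≥ 2a + 2` whenever `H` has paths `z₁ ⇝ u₁`,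
`z₂ ⇝ u₂` with `z₁ ≠ z₂`, `u₁ ≠ u₂`, and it remains to find a cycle of length `≥ a / 2` in `H`.

Suppose all cycles of `H` have length `≤ k` with `2k < a`. For `S ⊆ X`, all out-neighbours in `S`
of the last vertex of a longest path in `S` lie on that path, hence on a cycle closed through its
last arc, so there are at most `k` of them; dually for the first vertex. Applying this to `X`,
`X - u₁` and `X - z₁` yields two endpoint pairs with distinct starts and distinct ends and degree
sum `≤ 4k + 2 < 2a + 2`.
-/

section PathsInRelation

variable (H : V → V → Prop) (S : Finset V)

def IsPathIn (p : List V) : Prop :=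
  p ≠ [] ∧ p.Nodup ∧ p.IsChain H ∧ ∀ v ∈ p, v ∈ S

def IsCycleIn (c : List V) : Prop :=
  IsPathIn H S c ∧ ∃ u v, c.head? = some u ∧ c.getLast? = some v ∧ H v u

def ReachableIn (z u : V) : Prop :=
  ∃ p, IsPathIn H S p ∧ p.head? = some z ∧ p.getLast? = some u

variable {H S}

theorem IsPathIn.mono {T : Finset V} {p : List V} (hp : IsPathIn H S p) (hST : S ⊆ T) :
    IsPathIn H T p :=
  ⟨hp.1, hp.2.1, hp.2.2.1, fun v hv => hST (hp.2.2.2 v hv)⟩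

theorem IsCycleIn.mono {T : Finset V} {c : List V} (hc : IsCycleIn H S c) (hST : S ⊆ T) :
    IsCycleIn H T c :=
  ⟨hc.1.mono hST, hc.2⟩

theorem ReachableIn.mono {T : Finset V} {z u : V} (h : ReachableIn H S z u) (hST : S ⊆ T) :
    ReachableIn H T z u :=
  let ⟨p, hp, hz, hu⟩ := h
  ⟨p, hp.mono hST, hz, hu⟩

theorem ReachableIn.left_mem {z u : V} (h : ReachableIn H S z u) : z ∈ S :=
  let ⟨_, hp, hz, _⟩ := h
  hp.2.2.2 z (List.mem_of_mem_head? hz)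

theorem ReachableIn.right_mem {z u : V} (h : ReachableIn H S z u) : u ∈ S :=
  let ⟨_, hp, _, hu⟩ := h
  hp.2.2.2 u (List.mem_of_mem_getLast? hu)

theorem isPathIn_reverse {p : List V} : IsPathIn H S p.reverse ↔ IsPathIn (flip H) S p := by
  simp only [IsPathIn, ne_eq, List.reverse_eq_nil_iff, List.nodup_reverse, List.isChain_reverse,
    List.mem_reverse]
  rfl

theorem isCycleIn_reverse {c : List V} : IsCycleIn H S c.reverse ↔ IsCycleIn (flip H) S c := by
  simp only [IsCycleIn, isPathIn_reverse, List.head?_reverse, List.getLast?_reverse]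
  exact and_congr_right fun _ => ⟨fun ⟨u, v, hu, hv, h⟩ => ⟨v, u, hv, hu, h⟩,
    fun ⟨u, v, hu, hv, h⟩ => ⟨v, u, hv, hu, h⟩⟩

theorem exists_isPathIn_forall_length_le (hS : S.Nonempty) :
    ∃ p, IsPathIn H S p ∧ ∀ q, IsPathIn H S q → q.length ≤ p.length := by
  classical
  obtain ⟨x, hxS⟩ := hS
  have length_le : ∀ q, IsPathIn H S q → q.length ≤ S.card := fun q hq => by
    rw [← List.toFinset_card_of_nodup hq.2.1]
    exact Finset.card_le_card fun v hv => hq.2.2.2 v (List.mem_toFinset.mp hv)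
  let P n := ∃ p, IsPathIn H S p ∧ p.length = n
  have hP1 : P 1 := ⟨[x], ⟨by simp, by simp, .singleton x, by simpa using hxS⟩, rfl⟩
  obtain ⟨p, hp, hlen⟩ := Nat.findGreatest_spec (Finset.card_pos.mpr ⟨x, hxS⟩) hP1
  exact ⟨p, hp, fun q hq => hlen ▸ Nat.le_findGreatest (length_le q hq) ⟨q, hq, rfl⟩⟩

end PathsInRelation

theorem natCard_subtype_le_card {P : V → Prop} {T : Finset V} (h : ∀ w, P w → w ∈ T) :
    Nat.card {w // P w} ≤ T.card := by
  simpa using Nat.card_le_card_of_injective (fun w : {w // P w} => (⟨w, h w w.2⟩ : T))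
    fun _ _ hw => Subtype.ext (by simpa using hw)

section DegreesInRelation

variable {H : V → V → Prop} {S : Finset V} {k : ℕ}

theorem outdegIn_le_outdegIn_erase_add_one [DecidableEq V] (u w : V) :
    outdegIn H S u ≤ outdegIn H ↑(S.erase w) u + 1 := by
  have hfin : {y | y ∈ S.erase w ∧ H u y}.Finite :=
    (S.erase w).finite_toSet.subset fun y hy => hy.1
  calc outdegIn H S u = {y | y ∈ S ∧ H u y}.ncard := Nat.card_coe_set_eq _
    _ ≤ (insert w {y | y ∈ S.erase w ∧ H u y}).ncard :=
        Set.ncard_le_ncard (fun y ⟨hyS, hy⟩ => by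
          by_cases hyw : y = w
          · exact .inl hyw
          · exact .inr ⟨Finset.mem_erase.mpr ⟨hyw, hyS⟩, hy⟩) (hfin.insert w)
    _ ≤ outdegIn H ↑(S.erase w) u + 1 := Set.ncard_insert_le _ _

theorem outdegIn_le_of_isPathIn (hk : ∀ c, IsCycleIn H S c → c.length ≤ k) {u : V} :
    ∀ {p : List V}, IsPathIn H S p → p.getLast? = some u → (∀ y ∈ S, H u y → y ∈ p) →
      outdegIn H S u ≤ k
  | [], hp, _, _ => absurd rfl hp.1
  | x :: t, hp, hu, hN => by
    classical
    by_cases hux : H u x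
    · calc outdegIn H S u ≤ (x :: t).toFinset.card :=
            natCard_subtype_le_card fun y hy => List.mem_toFinset.mpr (hN y hy.1 hy.2)
        _ ≤ (x :: t).length := List.toFinset_card_le _
        _ ≤ k := hk _ ⟨hp, x, u, rfl, hu, hux⟩
    have hN' : ∀ y ∈ S, H u y → y ∈ t := fun y hyS hy =>
      (List.mem_cons.mp (hN y hyS hy)).resolve_left fun hyx => hux (hyx ▸ hy)
    rcases t with _ | ⟨y, t⟩
    · exact (natCard_subtype_le_card (T := ∅) fun y hy => hN' y hy.1 hy.2).trans (Nat.zero_le k)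
    · obtain ⟨-, hnd, hch, hmem⟩ := hp
      refine outdegIn_le_of_isPathIn hk ⟨List.cons_ne_nil _ _, hnd.of_cons, hch.tail,
        fun v hv => hmem v (List.mem_cons_of_mem _ hv)⟩ ?_ hN'
      rwa [List.getLast?_cons_cons] at hu

theorem outdegIn_le_of_forall_length_le {p : List V} (hp : IsPathIn H S p)
    (hmax : ∀ q, IsPathIn H S q → q.length ≤ p.length)
    (hk : ∀ c, IsCycleIn H S c → c.length ≤ k) {u : V} (hu : p.getLast? = some u) :
    outdegIn H S u ≤ k := by
  refine outdegIn_le_of_isPathIn hk hp hu fun y hyS hy => ?_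
  by_contra hyp
  have hlonger : IsPathIn H S (p ++ [y]) :=
    ⟨by simp, List.nodup_append.mpr ⟨hp.2.1, List.nodup_singleton y, by grind⟩,
      hp.2.2.1.append (.singleton y) (by simpa [hu]),
      by grind [hp.2.2.2]⟩
  simpa using hmax _ hlonger

theorem exists_reachableIn_indegIn_outdegIn_le (hS : S.Nonempty)
    (hk : ∀ c, IsCycleIn H S c → c.length ≤ k) :
    ∃ z ∈ S, ∃ u ∈ S, ReachableIn H S z u ∧ indegIn H S z ≤ k ∧ outdegIn H S u ≤ k := by
  obtain ⟨p, hp, hmax⟩ := exists_isPathIn_forall_length_le (H := H) hS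
  have hz := List.head?_eq_some_head hp.1
  have hu := List.getLast?_eq_some_getLast hp.1
  refine ⟨_, hp.2.2.2 _ (List.head_mem _), _, hp.2.2.2 _ (List.getLast_mem _), ⟨p, hp, hz, hu⟩,
    ?_, outdegIn_le_of_forall_length_le hp hmax hk hu⟩
  -- in-degrees of `H` are out-degrees of `flip H`, whose longest paths are reversed ones
  refine outdegIn_le_of_forall_length_le (H := flip H) (isPathIn_reverse.mp ?_)
    (fun q hq => ?_) (fun c hc => ?_) (by rwa [List.getLast?_reverse])
  · rwa [List.reverse_reverse]
  · simpa using hmax q.reverse (isPathIn_reverse.mpr hq)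
  · simpa using hk c.reverse (isCycleIn_reverse.mpr hc)

end DegreesInRelation

def EndpointDegreeCondition (H : V → V → Prop) (X : Finset V) : Prop :=
  ∀ z₁ u₁ z₂ u₂, ReachableIn H X z₁ u₁ → ReachableIn H X z₂ u₂ → z₁ ≠ z₂ → u₁ ≠ u₂ →
    2 * X.card + 2 ≤ indegIn H X z₁ + outdegIn H X u₁ + indegIn H X z₂ + outdegIn H X u₂

theorem EndpointDegreeCondition.exists_isCycleIn {H : V → V → Prop} {X : Finset V}
    (hdeg : EndpointDegreeCondition H X) (hX : 2 ≤ X.card) :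
    ∃ c, IsCycleIn H X c ∧ X.card ≤ 2 * c.length := by
  classical
  by_contra! hshort
  set k := (X.card - 1) / 2
  have hk : ∀ S ⊆ X, ∀ c, IsCycleIn H S c → c.length ≤ k := fun S hS c hc => by
    have := hshort c (hc.mono hS)
    omega
  obtain ⟨z₁, -, u₁, -, h₁, hin₁, hout₁⟩ :=
    exists_reachableIn_indegIn_outdegIn_le (Finset.card_pos.mp (by omega)) (hk X subset_rfl)
  have ends_avoiding : ∀ w, ∃ z ∈ X.erase w, ∃ u ∈ X.erase w,
      ReachableIn H X z u ∧ indegIn H X z ≤ k + 1 ∧ outdegIn H X u ≤ k + 1 := fun w => by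
    have hne : (X.erase w).Nonempty := Finset.card_pos.mp <| by
      have := Finset.pred_card_le_card_erase (s := X) (a := w)
      omega
    obtain ⟨z, hz, u, hu, hzu, hin, hout⟩ :=
      exists_reachableIn_indegIn_outdegIn_le hne (hk _ (X.erase_subset w))
    exact ⟨z, hz, u, hu, hzu.mono (X.erase_subset w),
      (outdegIn_le_outdegIn_erase_add_one (H := flip H) z w).trans (Nat.add_le_add_right hin 1),
      (outdegIn_le_outdegIn_erase_add_one u w).trans (Nat.add_le_add_right hout 1)⟩
  obtain ⟨z₂, -, u₂, hu₂, h₂, hin₂, hout₂⟩ := ends_avoiding u₁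
  obtain ⟨z₃, hz₃, u₃, -, h₃, hin₃, hout₃⟩ := ends_avoiding z₁
  replace hu₂ := Finset.ne_of_mem_erase hu₂
  replace hz₃ := Finset.ne_of_mem_erase hz₃
  -- one of the pairs `{1, 2}`, `{1, 3}`, `{2, 3}` of endpoint pairs has distinct starts and ends
  have : 2 * k < X.card := by omega
  by_cases hz : z₂ = z₁
  · by_cases hu : u₃ = u₁
    · subst hz hu
      have := hdeg z₂ u₂ z₃ u₃ h₂ h₃ (Ne.symm hz₃) hu₂
      omega
    · have := hdeg z₁ u₁ z₃ u₃ h₁ h₃ (Ne.symm hz₃) (Ne.symm hu)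
      omega
  · have := hdeg z₁ u₁ z₂ u₂ h₁ h₂ (Ne.symm hz) (Ne.symm hu₂)
    omega

theorem isChain_of_alt {P Q R : V → V → Prop} (hP : ∀ ⦃u v⦄, P u v → R u v)
    (hQ : ∀ ⦃u v⦄, Q u v → R u v) :
    ∀ {l : List V}, Alt P Q l → l.IsChain R
  | [], _ => .nil
  | [_], _ => .singleton _
  | _ :: _ :: _, ⟨h, ht⟩ => (isChain_of_alt hQ hP ht).cons_cons (hP h)

theorem Alt.of_append {P Q : V → V → Prop} :
    ∀ {l₁ l₂ : List V}, Alt P Q (l₁ ++ l₂) → Alt P Q l₁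
  | [], _, _ => trivial
  | [_], _, _ => trivial
  | _ :: b :: t, l₂, ⟨h, ht⟩ => ⟨h, Alt.of_append (l₁ := b :: t) (l₂ := l₂) ht⟩

def contractMatching (A : V → V → Prop) (M : V → V) (u v : V) : Prop := A (M u) v

def liftPath (M : V → V) : List V → List V
  | [] => []
  | x :: t => x :: M x :: liftPath M t

section LiftPath

variable {A : V → V → Prop} {X Y : Finset V} {M : V → V}

@[simp]
theorem length_liftPath (l : List V) : (liftPath M l).length = 2 * l.length := by
  induction l with
  | nil => rfl
  | cons x t ih => simp only [liftPath, List.length_cons, ih]; ring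

@[simp]
theorem liftPath_append (l₁ l₂ : List V) :
    liftPath M (l₁ ++ l₂) = liftPath M l₁ ++ liftPath M l₂ := by
  induction l₁ with
  | nil => rfl
  | cons x t ih => simp [liftPath, ih]

theorem head?_liftPath (l : List V) : (liftPath M l).head? = l.head? := by
  cases l <;> rfl

theorem getLast?_liftPath (l : List V) : (liftPath M l).getLast? = l.getLast?.map M := by
  induction l with
  | nil => rfl
  | cons x t ih => cases t <;> simp_all [liftPath]

theorem mem_liftPath {l : List V} {v : V} : v ∈ liftPath M l ↔ v ∈ l ∨ ∃ x ∈ l, M x = v := by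
  induction l with
  | nil => simp [liftPath]
  | cons x t ih => grind [liftPath]

theorem CompleteMatching.apply_notMem (hmatch : CompleteMatching A X Y M) (hXY : Disjoint X Y) :
    ∀ x ∈ X, M x ∉ X :=
  fun x hx => Finset.disjoint_right.mp hXY (hmatch.1 x hx).1

theorem CompleteMatching.isChain_of_alt (hmatch : CompleteMatching A X Y M) {l : List V}
    (h : Alt (InM X M) (NotM A X M) l) : l.IsChain A :=
  BipDigraph.isChain_of_alt (fun u _ h => h.2 ▸ (hmatch.1 u h.1).2) (fun _ _ h => h.1) h

theorem nodup_liftPath (hinj : Set.InjOn M X) (hout : ∀ x ∈ X, M x ∉ X) {l : List V}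
    (hl : l.Nodup) (hlX : ∀ v ∈ l, v ∈ X) : (liftPath M l).Nodup := by
  induction l with
  | nil => exact List.nodup_nil
  | cons x t ih =>
    simp only [List.nodup_cons, List.mem_cons] at hl hlX
    simp only [liftPath, List.nodup_cons, List.mem_cons, mem_liftPath]
    refine ⟨?_, ?_, ih hl.2 fun v hv => hlX v (.inr hv)⟩
    · grind
    · grind [Set.InjOn]

theorem alt_liftPath (hout : ∀ x ∈ X, M x ∉ X) :
    ∀ {l : List V}, (∀ v ∈ l, v ∈ X) → l.IsChain (contractMatching A M) →
      Alt (InM X M) (NotM A X M) (liftPath M l)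
  | [], _, _ => trivial
  | [x], hlX, _ => ⟨⟨hlX x (by simp), rfl⟩, trivial⟩
  | x :: y :: t, hlX, hch => by
    have hx : x ∈ X := hlX x (by simp)
    refine ⟨⟨hx, rfl⟩, ⟨(List.isChain_cons_cons.mp hch).1, fun hin => hout x hx hin.1⟩, ?_⟩
    exact alt_liftPath hout (fun v hv => hlX v (List.mem_cons_of_mem x hv)) hch.tail

theorem IsPathIn.isCompatPath_liftPath (hmatch : CompleteMatching A X Y M) (hXY : Disjoint X Y)
    {p : List V} (hp : IsPathIn (contractMatching A M) X p) :
    IsCompatPath A X M (liftPath M p) := by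
  have hout := hmatch.apply_notMem hXY
  have halt := alt_liftPath hout hp.2.2.2 hp.2.2.1
  refine ⟨?_, nodup_liftPath hmatch.2 hout hp.2.1 hp.2.2.2, ?_, .inl halt⟩
  · simpa [← List.length_pos_iff] using hp.1
  · exact hmatch.isChain_of_alt halt

theorem ReachableIn.exists_isCompatPathFromTo (hmatch : CompleteMatching A X Y M)
    (hXY : Disjoint X Y) {z u : V} (h : ReachableIn (contractMatching A M) X z u) :
    ∃ p, IsCompatPathFromTo A X M p z (M u) :=
  let ⟨p, hp, hz, hu⟩ := h
  ⟨liftPath M p, hp.isCompatPath_liftPath hmatch hXY, by rw [head?_liftPath, hz],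
    by rw [getLast?_liftPath, hu]; rfl⟩

theorem IsCycleIn.isCompatCycle_liftPath (hmatch : CompleteMatching A X Y M) (hXY : Disjoint X Y)
    {c : List V} (hc : IsCycleIn (contractMatching A M) X c) :
    IsCompatCycle A X M (liftPath M c) := by
  obtain ⟨hp, u, v, hu, hv, hvu⟩ := hc
  have hout := hmatch.apply_notMem hXY
  have hclosed : (c ++ [u]).IsChain (contractMatching A M) :=
    hp.2.2.1.append (.singleton u) (by simpa [hv] using hvu)
  have halt : Alt (InM X M) (NotM A X M) (liftPath M c ++ [u]) := by
    have := alt_liftPath hout (by grind [hp.2.2.2, List.mem_of_mem_head? hu]) hclosed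
    exact Alt.of_append (l₂ := [M u]) (by simpa [liftPath] using this)
  refine ⟨?_, nodup_liftPath hmatch.2 hout hp.2.1 hp.2.2.2, u, by rw [head?_liftPath, hu],
    hmatch.isChain_of_alt halt, .inl halt⟩
  have := List.length_pos_iff.mpr hp.1
  simp only [length_liftPath]
  omega

end LiftPath

section Degrees

variable {A : V → V → Prop} {X Y : Finset V} {M : V → V} {a : ℕ}

theorem outdeg_eq_outdegIn {S : Set V} {v : V} (h : ∀ w, A v w → w ∈ S) :
    outdeg A v = outdegIn A S v :=
  Nat.card_congr <| Equiv.subtypeEquivRight fun w => ⟨fun hw => ⟨h w hw, hw⟩, And.right⟩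

theorem indeg_le_indegIn_contractMatching {x : V} (hM : ∀ w, A w x → ∃ z ∈ X, M z = w) :
    indeg A x ≤ indegIn (contractMatching A M) X x := by
  set s := {z | z ∈ X ∧ A (M z) x}
  have hs : s.Finite := X.finite_toSet.subset fun z hz => hz.1
  calc indeg A x = {w | A w x}.ncard := Nat.card_coe_set_eq _
    _ ≤ (M '' s).ncard := Set.ncard_le_ncard (fun w hw => by
          obtain ⟨z, hz, rfl⟩ := hM w hw
          exact ⟨z, ⟨hz, hw⟩, rfl⟩) (hs.image M)
    _ ≤ s.ncard := Set.ncard_image_le hs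
    _ = indegIn (contractMatching A M) X x := (Nat.card_coe_set_eq _).symm

theorem CompleteMatching.surjOn (hmatch : CompleteMatching A X Y M) (hcard : X.card = Y.card) :
    Set.SurjOn M X Y := by
  classical
  have himage : X.image M = Y := Finset.eq_of_subset_of_card_le
    (Finset.image_subset_iff.mpr fun x hx => (hmatch.1 x hx).1)
    (by rw [Finset.card_image_of_injOn hmatch.2, hcard])
  intro y hy
  simpa [← himage] using hy

theorem BalancedBipartite.mem_of_adj (hbb : BalancedBipartite A X Y a) {u v : V}
    (h : A u v ∨ A v u) : (u ∈ X → v ∈ Y) ∧ (u ∈ Y → v ∈ X) := by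
  obtain ⟨-, -, hXY, -, harc⟩ := hbb
  have := Finset.disjoint_left.mp hXY
  rcases h with h | h <;> rcases harc _ _ h with ⟨h₁, h₂⟩ | ⟨h₁, h₂⟩ <;> grind

theorem deg_le_add_indegIn (hbb : BalancedBipartite A X Y a) (hmatch : CompleteMatching A X Y M)
    {x : V} (hx : x ∈ X) : deg A x ≤ a + indegIn (contractMatching A M) X x := by
  have hout : outdeg A x ≤ a := hbb.2.1 ▸
    natCard_subtype_le_card fun w hw => (hbb.mem_of_adj (.inl hw)).1 hx
  have hin := indeg_le_indegIn_contractMatching (M := M) fun w hw =>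
    hmatch.surjOn (hbb.1.trans hbb.2.1.symm) ((hbb.mem_of_adj (.inr hw)).1 hx)
  exact Nat.add_le_add hout hin

theorem deg_apply_le_add_outdegIn (hbb : BalancedBipartite A X Y a)
    (hmatch : CompleteMatching A X Y M) {u : V} (hu : u ∈ X) :
    deg A (M u) ≤ a + outdegIn (contractMatching A M) X u := by
  have hMu := (hmatch.1 u hu).1
  have hin : indeg A (M u) ≤ a := hbb.1 ▸
    natCard_subtype_le_card fun w hw => (hbb.mem_of_adj (.inr hw)).2 hMu
  have hout : outdeg A (M u) = outdegIn (contractMatching A M) X u :=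
    outdeg_eq_outdegIn fun w hw => (hbb.mem_of_adj (.inl hw)).2 hMu
  rw [deg, hout, add_comm]
  exact Nat.add_le_add_right hin _

end Degrees

theorem CondA.endpointDegreeCondition_contractMatching {A : V → V → Prop} {X Y : Finset V}
    {M : V → V} {a : ℕ} (hA : CondA A X Y M a) (hbb : BalancedBipartite A X Y a)
    (hmatch : CompleteMatching A X Y M) : EndpointDegreeCondition (contractMatching A M) X := by
  intro z₁ u₁ z₂ u₂ h₁ h₂ hz hu
  have hXY : Disjoint X Y := hbb.2.2.1
  have hA₁₂ := hA z₁ z₂ (M u₁) (M u₂) h₁.left_mem h₂.left_mem (hmatch.1 u₁ h₁.right_mem).1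
    (hmatch.1 u₂ h₂.right_mem).1 hz (hmatch.2.ne h₁.right_mem h₂.right_mem hu)
    (h₁.exists_isCompatPathFromTo hmatch hXY) (h₂.exists_isCompatPathFromTo hmatch hXY)
  have := deg_le_add_indegIn hbb hmatch h₁.left_mem
  have := deg_le_add_indegIn hbb hmatch h₂.left_mem
  have := deg_apply_le_add_outdegIn hbb hmatch h₁.right_mem
  have := deg_apply_le_add_outdegIn hbb hmatch h₂.right_mem
  have := hbb.1
  omega

theorem stmt6_general {V : Type} (A : V → V → Prop)
    (X Y : Finset V) (a : ℕ) (ha : 3 ≤ a)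
    (hbb : BalancedBipartite A X Y a)
    (M : V → V) (hmatch : CompleteMatching A X Y M)
    (hA : CondA A X Y M a) :
    ∃ p : List V, IsCompatCycle A X M p ∧ a ≤ p.length := by
  have hXa : X.card = a := hbb.1
  obtain ⟨c, hc, hlen⟩ :=
    (hA.endpointDegreeCondition_contractMatching hbb hmatch).exists_isCycleIn (by omega)
  refine ⟨liftPath M c, hc.isCompatCycle_liftPath hmatch hbb.2.2.1, ?_⟩
  rwa [length_liftPath, ← hXa]

/-- a balanced bipartite digraph with classes of cardinality `a' ≥ 3`,
possessing a complete matching `M'` from `X'` to `Y'` and satisfying condition (A),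
contains an `M'`-compatible oriented cycle of length at least `a'`. -/
theorem stmt6 {V : Type} [Fintype V] [DecidableEq V] (A : V → V → Prop)
    (X Y : Finset V) (a : ℕ) (ha : 3 ≤ a)
    (hbb : BalancedBipartite A X Y a)
    (M : V → V) (hmatch : CompleteMatching A X Y M)
    (hA : CondA A X Y M a) :
    ∃ p : List V, IsCompatCycle A X M p ∧ a ≤ p.length :=
  stmt6_general A X Y a ha hbb M hmatch hA

end BipDigraph
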